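/- Suppose a square-integrable process H(t,x), t ≥ 0, x ∈ ℝ, satisfies the covariance-to-variance reduction, has Brownian spatial increments in the sense Var(H(t,x) − H(t,0)) = |x| for all t, x, and satisfies lim_{s→∞} s^{-2/3} Var H(s,0) = v > 0. Then for all fixed x, y ∈ ℝ and a ≥ 1, lim_{s→∞} Corr(H(s,x), H(as,y)) = (1 + a^{2/3} − (a−1)^{2/3})/(2a^{1/3}). -/

import Mathlib

/-!
By the covariance-to-variance reduction,
`Cov(H(s,x), H(as,y)) = (Var H(s,x) + Var H(as,y) - Var H((a-1)s, y-x)) / 2`,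
so everything reduces to the growth of single variances. Writing `H(t,z) = H(t,0) + (H(t,z) - H(t,0))`,
Cauchy–Schwarz bounds `|Var H(t,z) - Var H(t,0)|` by `2 √(Var H(t,0)) √|z| + |z| = o(t^{2/3})`, so
`Var H(t,z) ~ v t^{2/3}` for every fixed `z`. Dividing numerator and denominator of the correlation by
`s^{2/3}` then gives the limit `v (1 + a^{2/3} - (a-1)^{2/3}) / 2` over `v a^{1/3}`.
-/

open MeasureTheory ProbabilityTheory Filter

/-- Covariance of two real random variables. -/
noncomputable def cov {Ω : Type*} [MeasurableSpace Ω] (μ : Measure Ω) (X Y : Ω → ℝ) : ℝ :=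
  ∫ ω, (X ω - ∫ ω', X ω' ∂μ) * (Y ω - ∫ ω', Y ω' ∂μ) ∂μ

/-- Correlation coefficient. -/
noncomputable def corr {Ω : Type*} [MeasurableSpace Ω] (μ : Measure Ω) (X Y : Ω → ℝ) : ℝ :=
  cov μ X Y / Real.sqrt (variance X μ * variance Y μ)

open Topology

lemma tendsto_div_of_abs_sub_le_sqrt {α : Type*} {l : Filter α} {f g r : α → ℝ} {v c : ℝ}
    (hf : Tendsto (fun x => f x / r x) l (𝓝 v)) (hr : Tendsto r l atTop)
    (hgf : ∀ᶠ x in l, |g x - f x| ≤ 2 * √(f x) * √c + c) :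
    Tendsto (fun x => g x / r x) l (𝓝 v) := by
  have herr : Tendsto (fun x => 2 * √c * (√(f x / r x) / √(r x)) + c / r x) l (𝓝 0) := by
    have h1 := (hf.sqrt.div_atTop (Real.tendsto_sqrt_atTop.comp hr)).const_mul (2 * √c)
    have h2 := tendsto_const_nhds (x := c).div_atTop hr
    simpa using h1.add h2
  have hdiff : Tendsto (fun x => g x / r x - f x / r x) l (𝓝 0) := by
    refine squeeze_zero_norm' ?_ herr
    filter_upwards [hgf, hr.eventually_gt_atTop 0] with x hx hrx
    rw [Real.norm_eq_abs, ← sub_div, abs_div, abs_of_pos hrx, Real.sqrt_div' _ hrx.le,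
      div_div, Real.mul_self_sqrt hrx.le]
    calc |g x - f x| / r x ≤ (2 * √(f x) * √c + c) / r x := by gcongr
      _ = _ := by ring
  simpa using hdiff.add hf

namespace ProbabilityTheory
variable {Ω : Type*} [MeasurableSpace Ω] {μ : Measure Ω} [IsFiniteMeasure μ] {X Y : Ω → ℝ}

lemma abs_covariance_le_sqrt_variance_mul (hX : MemLp X 2 μ) (hY : MemLp Y 2 μ) :
    |cov[X, Y; μ]| ≤ √(Var[X; μ]) * √(Var[Y; μ]) := by
  have hquad : ∀ t : ℝ, 0 ≤ Var[Y; μ] * (t * t) + 2 * cov[X, Y; μ] * t + Var[X; μ] := by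
    intro t
    have := variance_add hX (hY.const_smul t)
    rw [covariance_smul_right, variance_smul] at this
    nlinarith [variance_nonneg (X + t • Y) μ]
  have hdisc := discrim_le_zero hquad
  rw [discrim] at hdisc
  rw [← Real.sqrt_mul (variance_nonneg X μ)]
  exact Real.abs_le_sqrt (by nlinarith)

lemma abs_variance_add_sub_variance_le (hX : MemLp X 2 μ) (hY : MemLp Y 2 μ) :
    |Var[X + Y; μ] - Var[X; μ]| ≤ 2 * √(Var[X; μ]) * √(Var[Y; μ]) + Var[Y; μ] := by
  rw [variance_add hX hY, abs_le]
  have hcs := abs_le.mp (abs_covariance_le_sqrt_variance_mul hX hY)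
  have := variance_nonneg Y μ
  constructor <;> nlinarith [hcs.1, hcs.2]


lemma tendsto_variance_div_of_variance_sub_eq {α : Type*} {l : Filter α} {X Y : α → Ω → ℝ}
    {r : α → ℝ} {v c : ℝ} (hX : ∀ s, MemLp (X s) 2 μ) (hY : ∀ s, MemLp (Y s) 2 μ)
    (hXv : Tendsto (fun s => Var[X s; μ] / r s) l (𝓝 v)) (hr : Tendsto r l atTop)
    (hYX : ∀ᶠ s in l, Var[Y s - X s; μ] = c) :
    Tendsto (fun s => Var[Y s; μ] / r s) l (𝓝 v) := by
  refine tendsto_div_of_abs_sub_le_sqrt (c := c) hXv hr ?_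
  filter_upwards [hYX] with s hs
  simpa only [add_sub_cancel, hs] using abs_variance_add_sub_variance_le (hX s) ((hY s).sub (hX s))

end ProbabilityTheory


lemma tendsto_comp_const_mul_div_rpow {f : ℝ → ℝ} {p v c : ℝ} (hp : 0 < p) (hc : 0 ≤ c)
    (hf : Tendsto (fun s => f s / s ^ p) atTop (𝓝 v)) :
    Tendsto (fun s => f (c * s) / s ^ p) atTop (𝓝 (v * c ^ p)) := by
  rcases hc.eq_or_lt with rfl | hc
  · simpa [Real.zero_rpow hp.ne'] using
      tendsto_const_nhds (x := f 0).div_atTop (tendsto_rpow_atTop hp)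
  · refine ((hf.comp (tendsto_id.const_mul_atTop hc)).mul_const (c ^ p)).congr' ?_
    filter_upwards [eventually_gt_atTop 0] with s hs
    have : c ^ p ≠ 0 := (Real.rpow_pos_of_pos hc p).ne'
    simp only [Function.comp_apply, id, Real.mul_rpow hc.le hs.le]
    field_simp

lemma tendsto_div_sqrt_mul {α : Type*} {l : Filter α} {N V W r : α → ℝ} {A B C : ℝ}
    (hN : Tendsto (fun x => N x / r x) l (𝓝 A)) (hV : Tendsto (fun x => V x / r x) l (𝓝 B))
    (hW : Tendsto (fun x => W x / r x) l (𝓝 C)) (hr : ∀ᶠ x in l, 0 < r x) (hBC : 0 < B * C) :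
    Tendsto (fun x => N x / √(V x * W x)) l (𝓝 (A / √(B * C))) := by
  refine (hN.div (hV.mul hW).sqrt (Real.sqrt_pos.mpr hBC).ne').congr' ?_
  filter_upwards [hr] with x hx
  rw [Pi.div_apply, div_mul_div_comm, Real.sqrt_div' _ (by positivity), Real.sqrt_mul_self hx.le,
    div_div_div_cancel_right₀ hx.ne']

/-- Aging with general fixed end-points for a field with the covariance-to-variance
reduction, Brownian spatial increments and KPZ variance growth. -/
theorem aging_general_endpoints {Ω : Type*} [MeasurableSpace Ω] (μ : Measure Ω)
    [IsProbabilityMeasure μ] (H : ℝ → ℝ → Ω → ℝ)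
    (hmem : ∀ t x : ℝ, MemLp (H t x) 2 μ)
    (hCVTV : ∀ s t x y : ℝ, 0 ≤ s → s ≤ t →
      cov μ (H s x) (H t y) =
        (variance (H s x) μ + variance (H t y) μ - variance (H (t - s) (y - x)) μ) / 2)
    (hBM : ∀ t x : ℝ, 0 ≤ t → variance (fun ω => H t x ω - H t 0 ω) μ = |x|)
    (v : ℝ) (hv : 0 < v)
    (hlim : Tendsto (fun s : ℝ => variance (H s 0) μ / s ^ ((2:ℝ)/3)) atTop (nhds v)) :
    ∀ x y : ℝ, ∀ a : ℝ, 1 ≤ a →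
      Tendsto (fun s : ℝ => corr μ (H s x) (H (a * s) y)) atTop
        (nhds ((1 + a ^ ((2:ℝ)/3) - (a - 1) ^ ((2:ℝ)/3)) / (2 * a ^ ((1:ℝ)/3)))) := by
  intro x y a ha
  have hp : (0 : ℝ) < 2 / 3 := by norm_num
  have hVar (z : ℝ) : Tendsto (fun s => variance (H s z) μ / s ^ ((2:ℝ)/3)) atTop (𝓝 v) :=
    tendsto_variance_div_of_variance_sub_eq (X := fun s => H s 0) (hmem · 0) (hmem · z) hlim
      (tendsto_rpow_atTop hp) ((eventually_ge_atTop 0).mono fun s hs => hBM s z hs)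
  have hVarScaled (c : ℝ) (hc : 0 ≤ c) (z : ℝ) :
      Tendsto (fun s => variance (H (c * s) z) μ / s ^ ((2:ℝ)/3)) atTop
        (𝓝 (v * c ^ ((2:ℝ)/3))) :=
    tendsto_comp_const_mul_div_rpow hp hc (hVar z)
  have hcov : Tendsto (fun s => cov μ (H s x) (H (a * s) y) / s ^ ((2:ℝ)/3)) atTop
      (𝓝 ((v + v * a ^ ((2:ℝ)/3) - v * (a - 1) ^ ((2:ℝ)/3)) / 2)) := by
    refine ((((hVar x).add (hVarScaled a (by linarith) y)).sub
      (hVarScaled (a - 1) (by linarith) (y - x))).div_const 2).congr' ?_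
    filter_upwards [eventually_ge_atTop 0] with s hs
    rw [hCVTV s (a * s) x y hs (le_mul_of_one_le_left hs ha), show a * s - s = (a - 1) * s by ring]
    ring
  have hlimit := tendsto_div_sqrt_mul hcov (hVar x) (hVarScaled a (by linarith) y)
    ((eventually_gt_atTop 0).mono fun s hs => Real.rpow_pos_of_pos hs _)
    (by positivity)
  have hvalue : (v + v * a ^ ((2:ℝ)/3) - v * (a - 1) ^ ((2:ℝ)/3)) / 2 / √(v * (v * a ^ ((2:ℝ)/3)))
      = (1 + a ^ ((2:ℝ)/3) - (a - 1) ^ ((2:ℝ)/3)) / (2 * a ^ ((1:ℝ)/3)) := by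
    have hcbrt : a ^ ((1:ℝ)/3) ≠ 0 := (Real.rpow_pos_of_pos (by linarith) _).ne'
    rw [← mul_assoc, Real.sqrt_mul (by positivity), Real.sqrt_mul_self hv.le, Real.sqrt_eq_rpow,
      ← Real.rpow_mul (by linarith)]
    norm_num
    field_simp
  rwa [hvalue] at hlimit
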